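/- Let C be a family of K-subsets of {1,...,n}, let A ⊆ C be a t-cover of C in the metric d(S,T) = √(|S△T|) (i.e., every S ∈ C is within distance t of some π(S) ∈ A), and let X be standard Gaussian on ℝⁿ. Then M_C(μ) := E₀[(1/μ)·log((1/N)∑_{S∈C}exp(μX_S))] ≤ μt²/2 + E₀[max_{S∈A} X_S]. -/

import Mathlib

/-!
Write `X_S = ∑_{i ∈ S} x_i` and let `π(S) ∈ A` be a centre within distance `t` of `S`.
Splitting `X_S = (X_S - X_{π(S)}) + X_{π(S)}` and bounding `X_{π(S)}` by the maximum over `A`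
gives, pointwise, `(1/μ) log mean_S exp(μ X_S) ≤ max_{T ∈ A} X_T + (1/μ) log Z`, where
`Z = mean_S exp(μ (X_S - X_{π(S)}))`. By Jensen, `E log Z ≤ log E Z`, and each
`X_S - X_{π(S)}` is a centred Gaussian of variance `|S △ π(S)| ≤ t²`, so `E Z ≤ exp(μ² t² / 2)`.
-/

open MeasureTheory Real Finset ProbabilityTheory
open scoped symmDiff

lemma MeasureTheory.Integrable.finset_sup' {α β : Type*} [MeasurableSpace α] {P : Measure α}
    {s : Finset β} (hs : s.Nonempty) {f : β → α → ℝ} (hf : ∀ b ∈ s, Integrable (f b) P) :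
    Integrable (fun x => s.sup' hs fun b => f b x) P := by
  induction hs using Finset.Nonempty.cons_induction with
  | singleton b => simpa using hf b (mem_singleton_self b)
  | cons b s hbs hs ih =>
    simp_rw [sup'_cons hs]
    exact (hf b (mem_cons_self b s)).sup (ih fun c hc => hf c (mem_cons_of_mem hc))

lemma MeasureTheory.integral_log_le_log_integral {Ω : Type*} [MeasurableSpace Ω]
    {P : Measure Ω} [IsProbabilityMeasure P] {Z : Ω → ℝ} (hpos : ∀ ω, 0 < Z ω)
    (hZ : Integrable Z P) (hlogZ : Integrable (fun ω => log (Z ω)) P) :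
    ∫ ω, log (Z ω) ∂P ≤ log (∫ ω, Z ω ∂P) := by
  set I := ∫ ω, Z ω ∂P
  have hI : 0 < I := by
    rw [integral_pos_iff_support_of_nonneg (fun ω => (hpos ω).le) hZ,
      Function.support_eq_univ fun ω => (hpos ω).ne']
    simp
  have tangent : ∀ ω, log (Z ω) ≤ log I + (Z ω / I - 1) := fun ω => by
    have := log_le_sub_one_of_pos (div_pos (hpos ω) hI)
    rw [log_div (hpos ω).ne' hI.ne'] at this
    linarith
  have hlin : Integrable (fun ω => Z ω / I - 1) P := (hZ.div_const I).sub (integrable_const 1)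
  calc ∫ ω, log (Z ω) ∂P ≤ ∫ ω, log I + (Z ω / I - 1) ∂P :=
        integral_mono hlogZ ((integrable_const _).add hlin) tangent
    _ = log I := by
        rw [integral_add (integrable_const _) hlin,
          integral_sub (hZ.div_const I) (integrable_const 1), integral_div, div_self hI.ne']
        simp

lemma Finset.one_div_card_mul_sum_le {ι : Type*} {s : Finset ι} (hs : s.Nonempty) {f : ι → ℝ}
    {a : ℝ} (h : ∀ i ∈ s, f i ≤ a) : (1 / #s : ℝ) * ∑ i ∈ s, f i ≤ a := by
  rw [one_div_mul_eq_div, ← expect_eq_sum_div_card]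
  exact expect_le hs h

noncomputable def logMeanExp {ι : Type*} (s : Finset ι) (y : ι → ℝ) : ℝ :=
  log ((1 / #s) * ∑ i ∈ s, exp (y i))

section logMeanExp

variable {ι : Type*} {s : Finset ι}

lemma one_div_card_mul_sum_exp_pos (hs : s.Nonempty) (y : ι → ℝ) :
    0 < (1 / #s : ℝ) * ∑ i ∈ s, exp (y i) :=
  mul_pos (by simpa using hs.card_pos) (sum_pos (fun i _ => exp_pos (y i)) hs)

lemma logMeanExp_le_sup' (hs : s.Nonempty) (y : ι → ℝ) : logMeanExp s y ≤ s.sup' hs y := by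
  rw [logMeanExp, log_le_iff_le_exp (one_div_card_mul_sum_exp_pos hs y)]
  exact one_div_card_mul_sum_le hs fun i hi => exp_le_exp.mpr (le_sup' y hi)

lemma sub_log_card_le_logMeanExp {i : ι} (hi : i ∈ s) (y : ι → ℝ) :
    y i - log #s ≤ logMeanExp s y := by
  have hs : s.Nonempty := ⟨i, hi⟩
  have hcard : (0 : ℝ) < #s := by simpa using hs.card_pos
  rw [logMeanExp, le_log_iff_exp_le (one_div_card_mul_sum_exp_pos hs y), exp_sub, exp_log hcard,
    one_div, div_eq_inv_mul]
  gcongr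
  exact single_le_sum (fun j _ => (exp_pos (y j)).le) hi

lemma logMeanExp_le_add_of_le_add (hs : s.Nonempty) {y z : ι → ℝ} {c : ℝ}
    (h : ∀ i ∈ s, y i ≤ z i + c) : logMeanExp s y ≤ logMeanExp s z + c := by
  have hmean : (1 / #s : ℝ) * ∑ i ∈ s, exp (y i) ≤ (1 / #s) * ∑ i ∈ s, exp (z i) * exp c := by
    gcongr with i hi
    rw [← exp_add]
    exact exp_le_exp.mpr (h i hi)
  rw [← sum_mul, ← mul_assoc] at hmean
  rw [logMeanExp, logMeanExp, ← log_exp c,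
    ← log_mul (one_div_card_mul_sum_exp_pos hs z).ne' (exp_pos c).ne']
  exact log_le_log (one_div_card_mul_sum_exp_pos hs y) hmean

lemma logMeanExp_mul_le_logMeanExp_mul_sub_add_sup' (hs : s.Nonempty) {A : Finset ι}
    (hA : A.Nonempty) {center : ι → ι} (hcenter : ∀ i ∈ s, center i ∈ A) {a : ℝ} (ha : 0 ≤ a)
    (y : ι → ℝ) :
    logMeanExp s (fun i => a * y i)
      ≤ logMeanExp s (fun i => a * (y i - y (center i))) + a * A.sup' hA y :=
  logMeanExp_le_add_of_le_add hs fun i hi => by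
    have := mul_le_mul_of_nonneg_left (le_sup' y (hcenter i hi)) ha
    linarith

variable {Ω : Type*} [MeasurableSpace Ω] {P : Measure Ω}

lemma integrable_logMeanExp [IsFiniteMeasure P] (hs : s.Nonempty) {Y : ι → Ω → ℝ}
    (hY : ∀ i ∈ s, Integrable (Y i) P) : Integrable (fun ω => logMeanExp s (Y · ω)) P := by
  obtain ⟨i, hi⟩ := hs
  have hmeas : AEMeasurable (fun ω => logMeanExp s (Y · ω)) P :=
    ((Finset.aemeasurable_fun_sum s fun j hj => (hY j hj).aemeasurable.exp).const_mul _).log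
  exact integrable_of_le_of_le hmeas.aestronglyMeasurable
    (ae_of_all _ fun ω => sub_log_card_le_logMeanExp hi (Y · ω))
    (ae_of_all _ fun ω => logMeanExp_le_sup' ⟨i, hi⟩ _)
    ((hY i hi).sub (integrable_const _)) (Integrable.finset_sup' ⟨i, hi⟩ hY)

lemma integral_logMeanExp_le [IsProbabilityMeasure P] (hs : s.Nonempty) {Y : ι → Ω → ℝ}
    {c : ℝ} (hY : ∀ i ∈ s, Integrable (Y i) P)
    (hexpY : ∀ i ∈ s, Integrable (fun ω => exp (Y i ω)) P)
    (hc : ∀ i ∈ s, ∫ ω, exp (Y i ω) ∂P ≤ exp c) :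
    ∫ ω, logMeanExp s (Y · ω) ∂P ≤ c := by
  have hmean : Integrable (fun ω => (1 / #s : ℝ) * ∑ i ∈ s, exp (Y i ω)) P :=
    (integrable_finsetSum s hexpY).const_mul _
  have hint : ∫ ω, (1 / #s : ℝ) * ∑ i ∈ s, exp (Y i ω) ∂P
      = (1 / #s : ℝ) * ∑ i ∈ s, ∫ ω, exp (Y i ω) ∂P := by
    rw [integral_const_mul, integral_finsetSum s hexpY]
  calc ∫ ω, logMeanExp s (Y · ω) ∂P
      ≤ log (∫ ω, (1 / #s : ℝ) * ∑ i ∈ s, exp (Y i ω) ∂P) :=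
        integral_log_le_log_integral (fun ω => one_div_card_mul_sum_exp_pos hs _) hmean
          (integrable_logMeanExp hs hY)
    _ ≤ log (exp c) := by
        rw [hint]
        refine log_le_log (mul_pos (by simpa using hs.card_pos) ?_) (one_div_card_mul_sum_le hs hc)
        exact sum_pos (fun i hi => integral_exp_pos (hexpY i hi)) hs
    _ = c := log_exp c

end logMeanExp

section Gaussian

variable {ι : Type*} [Fintype ι]

lemma integral_exp_mul_gaussianReal_zero_one (c : ℝ) :
    ∫ y, exp (c * y) ∂gaussianReal 0 1 = exp (c ^ 2 / 2) := by
  simpa [mgf] using congrFun (mgf_id_gaussianReal (μ := 0) (v := 1)) c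

lemma integrable_exp_sum_mul_pi_gaussianReal (c : ι → ℝ) :
    Integrable (fun x : ι → ℝ => exp (∑ i, c i * x i))
      (Measure.pi fun _ => gaussianReal 0 1) := by
  simp_rw [exp_sum]
  exact Integrable.fintype_prod fun i => integrable_exp_mul_gaussianReal (c i)

lemma integral_exp_sum_mul_pi_gaussianReal (c : ι → ℝ) :
    ∫ x : ι → ℝ, exp (∑ i, c i * x i) ∂(Measure.pi fun _ => gaussianReal 0 1)
      = exp ((∑ i, c i ^ 2) / 2) := by
  simp_rw [exp_sum, integral_fintype_prod_eq_prod (fun i y => exp (c i * y)),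
    integral_exp_mul_gaussianReal_zero_one, sum_div, exp_sum]

lemma integrable_sum_pi_gaussianReal (S : Finset ι) :
    Integrable (fun x : ι → ℝ => ∑ i ∈ S, x i) (Measure.pi fun _ => gaussianReal 0 1) :=
  integrable_finsetSum S fun _ _ => integrable_eval ((memLp_id_gaussianReal 1).integrable le_rfl)

variable [DecidableEq ι]

lemma sum_sub_sum_eq_sum_indicator_sub_mul (S T : Finset ι) (x : ι → ℝ) :
    ∑ i ∈ S, x i - ∑ i ∈ T, x i
      = ∑ i, ((if i ∈ S then 1 else 0) - (if i ∈ T then 1 else 0)) * x i := by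
  simp only [sub_mul, ite_mul, one_mul, zero_mul, sum_sub_distrib, sum_ite_mem, univ_inter]

lemma sum_indicator_sub_sq (S T : Finset ι) :
    ∑ i : ι, ((if i ∈ S then (1 : ℝ) else 0) - (if i ∈ T then 1 else 0)) ^ 2
      = (#(S ∆ T) : ℝ) := by
  have h : ∀ i, ((if i ∈ S then (1 : ℝ) else 0) - (if i ∈ T then 1 else 0)) ^ 2
      = if i ∈ S ∆ T then 1 else 0 := by
    intro i
    by_cases hS : i ∈ S <;> by_cases hT : i ∈ T <;> simp [hS, hT, mem_symmDiff]
  simp only [h, sum_ite_mem, univ_inter, sum_const, nsmul_eq_mul, mul_one]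

lemma integrable_exp_mul_sum_sub_sum_pi_gaussianReal (a : ℝ) (S T : Finset ι) :
    Integrable (fun x : ι → ℝ => exp (a * (∑ i ∈ S, x i - ∑ i ∈ T, x i)))
      (Measure.pi fun _ => gaussianReal 0 1) := by
  simp_rw [sum_sub_sum_eq_sum_indicator_sub_mul, mul_sum, ← mul_assoc]
  exact integrable_exp_sum_mul_pi_gaussianReal _

lemma integral_exp_mul_sum_sub_sum_pi_gaussianReal (a : ℝ) (S T : Finset ι) :
    ∫ x : ι → ℝ, exp (a * (∑ i ∈ S, x i - ∑ i ∈ T, x i)) ∂(Measure.pi fun _ => gaussianReal 0 1)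
      = exp (a ^ 2 * #(S ∆ T) / 2) := by
  simp_rw [sum_sub_sum_eq_sum_indicator_sub_mul, mul_sum, ← mul_assoc,
    integral_exp_sum_mul_pi_gaussianReal, mul_pow, ← mul_sum, sum_indicator_sub_sq]

lemma integral_logMeanExp_mul_sum_sub_sum_le {C : Finset (Finset ι)} (hC : C.Nonempty)
    (a : ℝ) {t : ℝ} {center : Finset ι → Finset ι}
    (hcenter : ∀ S ∈ C, (#(S ∆ center S) : ℝ) ≤ t ^ 2) :
    ∫ x, logMeanExp C (fun S => a * (∑ i ∈ S, x i - ∑ i ∈ center S, x i))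
      ∂(Measure.pi fun _ => gaussianReal 0 1) ≤ a ^ 2 * t ^ 2 / 2 := by
  refine integral_logMeanExp_le hC (fun S _ => ?_)
    (fun S _ => integrable_exp_mul_sum_sub_sum_pi_gaussianReal a S (center S)) fun S hS => ?_
  · exact ((integrable_sum_pi_gaussianReal S).sub
      (integrable_sum_pi_gaussianReal (center S))).const_mul a
  · rw [integral_exp_mul_sum_sub_sum_pi_gaussianReal]
    gcongr
    exact hcenter S hS

end Gaussian

theorem stmt18_general (n : ℕ) (μ t : ℝ) (hμ : 0 < μ)
    (C A : Finset (Finset (Fin n))) (hC : C.Nonempty) (hA : A.Nonempty)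
    -- A is a t-cover of C: every S ∈ C is within distance t of some member of A
    (hcover : ∀ S ∈ C, ∃ T ∈ A, (((S \ T) ∪ (T \ S)).card : ℝ) ≤ t^2)
    (P₀ : Measure (Fin n → ℝ))
    (hP₀ : P₀ = Measure.pi fun _ : Fin n => gaussianReal 0 1) :
    (∫ x, (1/μ) * Real.log ((1 / (C.card : ℝ)) *
        ∑ S ∈ C, Real.exp (μ * ∑ i ∈ S, x i)) ∂P₀)
      ≤ μ * t^2 / 2 + ∫ x, A.sup' hA (fun T => ∑ i ∈ T, x i) ∂P₀ := by
  have : IsProbabilityMeasure P₀ := hP₀ ▸ inferInstance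
  choose! center hcenterA hcenter_dist using hcover
  set X : Finset (Fin n) → (Fin n → ℝ) → ℝ := fun S x => ∑ i ∈ S, x i
  set M : (Fin n → ℝ) → ℝ := fun x => A.sup' hA fun T => X T x
  have hX : ∀ S, Integrable (X S) P₀ := hP₀ ▸ integrable_sum_pi_gaussianReal
  have hM : Integrable M P₀ := Integrable.finset_sup' hA fun T _ => hX T
  have hL : Integrable (fun x => logMeanExp C fun S => μ * (X S x - X (center S) x)) P₀ :=
    integrable_logMeanExp hC fun S _ => ((hX S).sub (hX (center S))).const_mul μ
  have hF := integrable_logMeanExp hC fun S _ => (hX S).const_mul μ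
  calc ∫ x, (1 / μ) * logMeanExp C (fun S => μ * X S x) ∂P₀
      ≤ ∫ x, M x + (1 / μ) * logMeanExp C (fun S => μ * (X S x - X (center S) x)) ∂P₀ := by
        refine integral_mono (hF.const_mul _) (hM.add (hL.const_mul _)) fun x => ?_
        have h := mul_le_mul_of_nonneg_left (logMeanExp_mul_le_logMeanExp_mul_sub_add_sup' hC hA
          hcenterA hμ.le (X · x)) (one_div_pos.mpr hμ).le
        rwa [mul_add, one_div, inv_mul_cancel_left₀ hμ.ne', ← one_div, add_comm] at h
    _ ≤ ∫ x, M x ∂P₀ + (1 / μ) * (μ ^ 2 * t ^ 2 / 2) := by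
        rw [integral_add hM (hL.const_mul _), integral_const_mul]
        gcongr
        exact hP₀ ▸ integral_logMeanExp_mul_sum_sub_sum_le hC μ hcenter_dist
    _ = μ * t ^ 2 / 2 + ∫ x, M x ∂P₀ := by
        field_simp
        ring

/-- If `A ⊆ C` is a `t`-cover of `C` in the metric
`d(S,T) = √|S △ T|`, then
`M_C(μ) = E₀[(1/μ)·log((1/N)∑_{S∈C} exp(μ X_S))] ≤ μt²/2 + E₀[max_{S∈A} X_S]`. -/
theorem stmt18 (n K : ℕ) (μ t : ℝ) (hμ : 0 < μ) (ht : 0 ≤ t)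
    (C A : Finset (Finset (Fin n))) (hC : C.Nonempty) (hA : A.Nonempty)
    (hAC : A ⊆ C) (hcard : ∀ S ∈ C, S.card = K)
    -- A is a t-cover of C: every S ∈ C is within distance t of some member of A
    (hcover : ∀ S ∈ C, ∃ T ∈ A, (((S \ T) ∪ (T \ S)).card : ℝ) ≤ t^2)
    (P₀ : Measure (Fin n → ℝ))
    (hP₀ : P₀ = Measure.pi fun _ : Fin n => gaussianReal 0 1) :
    (∫ x, (1/μ) * Real.log ((1 / (C.card : ℝ)) *
        ∑ S ∈ C, Real.exp (μ * ∑ i ∈ S, x i)) ∂P₀)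
      ≤ μ * t^2 / 2 + ∫ x, A.sup' hA (fun T => ∑ i ∈ T, x i) ∂P₀ :=
  stmt18_general n μ t hμ C A hC hA hcover P₀ hP₀
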